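/- If p, q, n, t are integers with p, q, n positive, p even and nq odd, then L_{pq} · ∑_{k=1}^{n} (−1)^{k−1} G_{2pk+pq+t} = L_{pn} · ∑_{k=1}^{q} (−1)^{k−1} G_{2pk+pn+t}. -/

import Mathlib

/-!
For even `d`, the Lucas identity `L_d G_m = G_{m+d} + G_{m-d}` makes `L_p` times the alternating
sum `∑_{k=1}^{N} (-1)^{k-1} G_{2pk+c}` telescope to `G_{p+c} + G_{(2N+1)p+c}` when `N` is odd, and
the same identity with `d = pN` turns this into `L_{pN} G_{pN+p+c}`. Taking `c = pq + t` for the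
sum of length `n` and `c = pn + t` for the sum of length `q`, both sides of the theorem become
`L_{pq} L_{pn} G_{pn+pq+p+t}` after multiplication by `L_p`, which is positive.
-/

open Finset

variable {R : Type*}

def IsFibonacciLike [Add R] (G : ℤ → R) : Prop :=
  ∀ m : ℤ, G (m + 1) = G m + G (m - 1)

namespace IsFibonacciLike

theorem apply_add_two [Add R] {G : ℤ → R} (hG : IsFibonacciLike G) (a : ℤ) :
    G (a + 2) = G (a + 1) + G a := by
  simpa [add_assoc] using hG (a + 1)

theorem lucas_mul_apply [CommRing R] {L G : ℤ → R} (hL0 : L 0 = 2) (hL1 : L 1 = 1)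
    (hL : IsFibonacciLike L) (hG : IsFibonacciLike G) (j : ℕ) (m : ℤ) :
    L j * G m = G (m + j) + (-1) ^ j * G (m - j) := by
  induction j using Nat.twoStepInduction generalizing m with
  | zero => simp [hL0, two_mul]
  | one => simp [hL1, hG m]
  | more j ih₀ ih₁ =>
    have hL₂ := hL.apply_add_two j
    have hG_up : G (m + (j + 2)) = G (m + (j + 1)) + G (m + j) := by
      simpa only [add_assoc] using hG.apply_add_two (m + j)
    have hG_down : G (m - j) = G (m - (j + 1)) + G (m - (j + 2)) := by
      convert hG.apply_add_two (m - (j + 2)) using 3 <;> ring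
    push_cast at ih₁ ⊢
    linear_combination ih₀ m + ih₁ m + G m * hL₂ - hG_up + (-1) ^ j * hG_down

theorem lucas_pos [CommRing R] [LinearOrder R] [IsStrictOrderedRing R] {L : ℤ → R}
    (hL0 : L 0 = 2) (hL1 : L 1 = 1) (hL : IsFibonacciLike L) (j : ℕ) : 0 < L j := by
  induction j using Nat.twoStepInduction with
  | zero => simp [hL0]
  | one => simp [hL1]
  | more j ih₀ ih₁ =>
    push_cast at ih₁ ⊢
    rw [hL.apply_add_two]
    positivity

end IsFibonacciLike

theorem mul_sum_alternating_eq_sub [CommRing R] {G : ℤ → R} {a : R} {d : ℤ}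
    (h : ∀ m, a * G m = G (m + d) + G (m - d)) (N : ℕ) (c : ℤ) :
    a * ∑ k ∈ Icc 1 N, (-1) ^ (k - 1) * G (2 * d * k + c) =
      G (d + c) - (-1) ^ N * G ((2 * N + 1) * d + c) := by
  induction N with
  | zero => simp
  | succ N ih =>
    rw [sum_Icc_succ_top (by omega), mul_add, ih, Nat.add_sub_cancel, mul_left_comm, h]
    push_cast
    ring_nf

theorem IsFibonacciLike.lucas_mul_sum_alternating_of_odd [CommRing R] {L G : ℤ → R}
    (hL0 : L 0 = 2) (hL1 : L 1 = 1) (hL : IsFibonacciLike L) (hG : IsFibonacciLike G)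
    {p N : ℕ} (hp : Even p) (hN : Odd N) (c : ℤ) :
    L p * ∑ k ∈ Icc 1 N, (-1) ^ (k - 1) * G (2 * p * k + c) = L (p * N) * G (p * N + p + c) := by
  have hsymm (j : ℕ) (hj : Even j) (m : ℤ) : L j * G m = G (m + j) + G (m - j) := by
    rw [lucas_mul_apply hL0 hL1 hL hG, hj.neg_one_pow, one_mul]
  rw [mul_sum_alternating_eq_sub (hsymm p hp), hN.neg_one_pow,
    ← Nat.cast_mul, hsymm _ (hp.mul_right N)]
  push_cast
  ring_nf

theorem stmt15_general (L G : ℤ → ℤ)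
    (hL0 : L 0 = 2) (hL1 : L 1 = 1) (hL : ∀ m : ℤ, L (m+1) = L m + L (m-1))
    (hG : ∀ m : ℤ, G (m+1) = G m + G (m-1))
    (p q n : ℕ) (t : ℤ)
    (hpe : Even p) (hodd : Odd (n*q)) :
    L (p*q) * ∑ k ∈ Icc 1 n, (-1 : ℤ)^(k-1) * G ((2*p*k : ℤ) + p*q + t) =
    L (p*n) * ∑ k ∈ Icc 1 q, (-1 : ℤ)^(k-1) * G ((2*p*k : ℤ) + p*n + t) := by
  obtain ⟨hn, hq⟩ := Nat.odd_mul.mp hodd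
  have hSn := IsFibonacciLike.lucas_mul_sum_alternating_of_odd hL0 hL1 hL hG hpe hn (p * q + t)
  have hSq := IsFibonacciLike.lucas_mul_sum_alternating_of_odd hL0 hL1 hL hG hpe hq (p * n + t)
  simp only [← add_assoc] at hSn hSq
  rw [show (p * q + p + p * n + t : ℤ) = p * n + p + p * q + t by ring] at hSq
  apply mul_left_cancel₀ (IsFibonacciLike.lucas_pos hL0 hL1 hL p).ne'
  linear_combination L (p * q) * hSn - L (p * n) * hSq

theorem stmt15 (L G : ℤ → ℤ)
    (hL0 : L 0 = 2) (hL1 : L 1 = 1) (hL : ∀ m : ℤ, L (m+1) = L m + L (m-1))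
    (hG : ∀ m : ℤ, G (m+1) = G m + G (m-1))
    (p q n : ℕ) (t : ℤ) (hp : 0 < p) (hq : 0 < q) (hn : 0 < n)
    (hpe : Even p) (hodd : Odd (n*q)) :
    L (p*q) * ∑ k ∈ Icc 1 n, (-1 : ℤ)^(k-1) * G ((2*p*k : ℤ) + p*q + t) =
    L (p*n) * ∑ k ∈ Icc 1 q, (-1 : ℤ)^(k-1) * G ((2*p*k : ℤ) + p*n + t) :=
  stmt15_general L G hL0 hL1 hL hG p q n t hpe hodd
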